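/- In the autoregressive Ising broadcast process with context depth w on T(d,h), for all indices i < j the block sums satisfy E[Z_i³ Z_j] = E[Z_i Z_j³] = α·(α·q_w)^{j−i−1}·M_{d,ρ,w}(3)·(dρ)^w. -/

import Mathlib

open Finset

noncomputable section

/-- A configuration of the rooted `d`-ary tree of height `h` with values in `S`:
a vertex at level `ℓ ≤ h` is a path from the root, i.e. a function `Fin ℓ → Fin d`,
and the configuration assigns an element of `S` to every vertex. -/
abbrev TreeConfig (d h : ℕ) (S : Type) := ∀ ℓ : Fin (h + 1), (Fin ℓ.val → Fin d) → S

/-- The value at the root of the tree. -/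
def rootOf {d h : ℕ} {S : Type} (σ : TreeConfig d h S) : S :=
  σ ⟨0, Nat.succ_pos h⟩ Fin.elim0

/-- The values at the leaves (level `h`) of the tree, read as a function on root-to-leaf paths. -/
def leavesOf {d h : ℕ} {S : Type} (σ : TreeConfig d h S) : (Fin h → Fin d) → S :=
  σ ⟨h, Nat.lt_succ_self h⟩

/-- Product over all edges of the tree of an edge weight `W (parent value) (child value)`. -/
def edgeProd {S : Type} (d h : ℕ) (W : S → S → ℝ) (σ : TreeConfig d h S) : ℝ :=
  ∏ ℓ : Fin h, ∏ f : Fin (ℓ.val + 1) → Fin d,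
    W (σ ⟨ℓ.val, Nat.lt_succ_of_lt ℓ.isLt⟩ fun i => f i.castSucc)
      (σ ⟨ℓ.val + 1, Nat.succ_lt_succ ℓ.isLt⟩ f)

/-- Probability of a full configuration under the broadcast process with root prior `ν`
and broadcast channel `W`. -/
def broadcastW {S : Type} (d h : ℕ) (ν : S → ℝ) (W : S → S → ℝ) (σ : TreeConfig d h S) : ℝ :=
  ν (rootOf σ) * edgeProd d h W σ

/-- The real spin value `±1` of a Boolean spin. -/
def spinVal (b : Bool) : ℝ := if b then 1 else -1

/-- The Ising broadcast channel: copy the parent spin with probability `(1+ρ)/2`. -/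
def isingEdge (ρ : ℝ) (a b : Bool) : ℝ := if a = b then (1 + ρ) / 2 else (1 - ρ) / 2

/-- Probability of a configuration under the Ising broadcast process with uniform root. -/
def isingW (d h : ℕ) (ρ : ℝ) (σ : TreeConfig d h Bool) : ℝ :=
  broadcastW d h (fun _ => (1 : ℝ) / 2) (isingEdge ρ) σ

/-- Probability of a configuration under the Ising broadcast process with the root
conditioned to equal `r`. -/
def isingWRooted (d h : ℕ) (ρ : ℝ) (r : Bool) (σ : TreeConfig d h Bool) : ℝ :=
  (if rootOf σ = r then 1 else 0) * edgeProd d h (isingEdge ρ) σ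

/-- The sum of the `d^h` leaf spins of a configuration. -/
def leafSum (d h : ℕ) (σ : TreeConfig d h Bool) : ℝ :=
  ∑ f : Fin h → Fin d, spinVal (leavesOf σ f)

/-- Expectation of a function of the configuration under the Ising broadcast process. -/
def isingExp (d h : ℕ) (ρ : ℝ) (g : TreeConfig d h Bool → ℝ) : ℝ :=
  ∑ σ : TreeConfig d h Bool, isingW d h ρ σ * g σ

/-- `M_{d,ρ,h}(k) = E[(Σ_ℓ X_ℓ)^k | X_root = +1]`. -/
def isingMoment (d h : ℕ) (ρ : ℝ) (k : ℕ) : ℝ :=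
  ∑ σ : TreeConfig d h Bool, isingWRooted d h ρ true σ * leafSum d h σ ^ k

/-- Variance of the sum of the leaf spins under the (true) Ising broadcast process. -/
def isingVar (d h : ℕ) (ρ : ℝ) : ℝ :=
  isingExp d h ρ (fun σ => leafSum d h σ ^ 2) - isingExp d h ρ (leafSum d h) ^ 2

/-- Marginal probability of a leaf spin assignment under the Ising broadcast process. -/
def leafW (d w : ℕ) (ρ : ℝ) (y : (Fin w → Fin d) → Bool) : ℝ :=
  ∑ σ : TreeConfig d w Bool, if leavesOf σ = y then isingW d w ρ σ else 0

/-- Marginal probability of a leaf spin assignment given the root equals `r`. -/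
def leafWRooted (d w : ℕ) (ρ : ℝ) (r : Bool) (y : (Fin w → Fin d) → Bool) : ℝ :=
  ∑ σ : TreeConfig d w Bool, if leavesOf σ = y then isingWRooted d w ρ r σ else 0

/-- Posterior mean `E[X_root | X_leaves = y]` of the root spin given the leaves. -/
def rootPostMean (d w : ℕ) (ρ : ℝ) (y : (Fin w → Fin d) → Bool) : ℝ :=
  (∑ σ : TreeConfig d w Bool,
      if leavesOf σ = y then isingW d w ρ σ * spinVal (rootOf σ) else 0) / leafW d w ρ y

/-- `q_w = E[E[X_root | X_leaves]^2]` for the Ising broadcast process on `T(d,w)`. -/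
def qIsing (d w : ℕ) (ρ : ℝ) : ℝ :=
  ∑ y : (Fin w → Fin d) → Bool, leafW d w ρ y * rootPostMean d w ρ y ^ 2

/-- The law `D_m` of the height of the least common ancestor of a uniformly random
adjacent pair of depth-`w` subtrees: `P(D_m = s) = (d-1) d^{m-s} / (d^m - 1)` for `1 ≤ s ≤ m`. -/
def lcaLaw (d m : ℕ) (s : ℕ) : ℝ :=
  if 1 ≤ s ∧ s ≤ m then ((d : ℝ) - 1) * (d : ℝ) ^ (m - s) / ((d : ℝ) ^ m - 1) else 0

/-- `α = E_{s ∼ D_m}[ρ^{2s}]`. -/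
def alphaAR (d m : ℕ) (ρ : ℝ) : ℝ := ∑ s ∈ Finset.Icc 1 m, lcaLaw d m s * ρ ^ (2 * s)

/-- Joint law of the two subtree root spins when their least common ancestor is at
height `s` above them: a pair of uniform `±1` spins with correlation `ρ^{2s}`. -/
def pairRootW (ρ : ℝ) (s : ℕ) (r r' : Bool) : ℝ :=
  (1 + spinVal r * spinVal r' * ρ ^ (2 * s)) / 4

/-- One-step transition of the autoregressive Ising broadcast process: the conditional law
of the next block of `d^w` leaves given that the previous block equals `y`, averaged over a
least common ancestor height `s ∼ D_m`. -/
def arStep (d w m : ℕ) (ρ : ℝ) (y y' : (Fin w → Fin d) → Bool) : ℝ :=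
  ∑ s ∈ Finset.Icc 1 m, lcaLaw d m s *
    ((∑ r : Bool, ∑ r' : Bool,
        pairRootW ρ s r r' * leafWRooted d w ρ r y * leafWRooted d w ρ r' y') / leafW d w ρ y)

/-- Joint probability of the blocks `Y 0, …, Y (n-1)` of the autoregressive Ising
broadcast process with context depth `w`. -/
def arWeight (d w m n : ℕ) (ρ : ℝ) (Y : Fin n → ((Fin w → Fin d) → Bool)) : ℝ :=
  (if hn : 0 < n then leafW d w ρ (Y ⟨0, hn⟩) else 1) *
    ∏ i : Fin (n - 1),
      arStep d w m ρ (Y ⟨i.val, by have := i.isLt; omega⟩)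
        (Y ⟨i.val + 1, by have := i.isLt; omega⟩)

/-- Expectation of a function of the blocks under the autoregressive Ising broadcast process. -/
def arExp (d w m n : ℕ) (ρ : ℝ) (g : (Fin n → ((Fin w → Fin d) → Bool)) → ℝ) : ℝ :=
  ∑ Y : Fin n → ((Fin w → Fin d) → Bool), arWeight d w m n ρ Y * g Y

/-- The block sum `Z_i = Σ_ℓ (Y_i)_ℓ`. -/
def blockSum (d w : ℕ) (y : (Fin w → Fin d) → Bool) : ℝ :=
  ∑ f : Fin w → Fin d, spinVal (y f)

/-- The total sum `Σ_i Z_i` of all `d^h` generated spins. -/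
def arTotal (d w n : ℕ) (Y : Fin n → ((Fin w → Fin d) → Bool)) : ℝ :=
  ∑ i : Fin n, blockSum d w (Y i)

/-- Variance of the total sum of spins generated by the autoregressive Ising broadcast
process with context depth `w` on `T(d,h)`. -/
def arVar (d h w : ℕ) (ρ : ℝ) : ℝ :=
  arExp d w (h - w) (d ^ (h - w)) ρ (fun Y => arTotal d w (d ^ (h - w)) Y ^ 2)
    - arExp d w (h - w) (d ^ (h - w)) ρ (arTotal d w (d ^ (h - w))) ^ 2

/-- Second moment of the total sum of spins of the autoregressive process. -/
def arSecond (d h w : ℕ) (ρ : ℝ) : ℝ :=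
  arExp d w (h - w) (d ^ (h - w)) ρ (fun Y => arTotal d w (d ^ (h - w)) Y ^ 2)

/-- Fourth moment of the total sum of spins of the autoregressive process. -/
def arFourth (d h w : ℕ) (ρ : ℝ) : ℝ :=
  arExp d w (h - w) (d ^ (h - w)) ρ (fun Y => arTotal d w (d ^ (h - w)) Y ^ 4)

/-- `C_{d,ρ}(2) = (1 - 1/d)·dρ²/(dρ² - 1)`. -/
def C2const (d : ℕ) (ρ : ℝ) : ℝ := (1 - 1 / (d : ℝ)) * ((d : ℝ) * ρ ^ 2) / ((d : ℝ) * ρ ^ 2 - 1)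

/-- `α* = Σ_{s ≥ 1} (1 - 1/d)(1/d)^{s-1} ρ^{2s}`. -/
def alphaStar (d : ℕ) (ρ : ℝ) : ℝ :=
  ∑' s : ℕ, (1 - 1 / (d : ℝ)) * (1 / (d : ℝ)) ^ s * ρ ^ (2 * (s + 1))

/-- `A_{d,ρ}(2) = C_{d,ρ}(2) + 2α*/(1 - α* q*)`. -/
def A2const (d : ℕ) (ρ : ℝ) (qstar : ℝ) : ℝ :=
  C2const d ρ + 2 * alphaStar d ρ / (1 - alphaStar d ρ * qstar)

end

/-!
The autoregressive process is a Markov chain on blocks with initial law `π = leafW` and kernel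
`P = arStep`, so `E[f(Y_a) g(Y_b)] = π ⬝ (P^a (f · P^(b-a) (g · P^(n-1-b) 1)))`.
By Bayes' rule `ℙ(leaves = y | root = r) = π(y) (1 + r m(y))`, where `m = rootPostMean`, so on the
support of `π` the kernel is `P(y, y') = π(y') (1 + α m(y) m(y'))`. Hence `π` is stationary,
`P` maps every `ψ` with `E[ψ(leaves) | root] = c X_root` to `α c m`, and `m` itself (for which
`c = q_w`) is an eigenvector with eigenvalue `α q_w`. Both `Z` and `Z³` are of this form, with
`c = (dρ)^w` and `c = M(3)` respectively; the latter by the spin-flip symmetry of the tree.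
-/

open Matrix

theorem pow_mulVec_eq_smul {n R : Type*} [Fintype n] [DecidableEq n] [CommSemiring R]
    {M : Matrix n n R} {v : n → R} {c : R} (hv : M *ᵥ v = c • v) (k : ℕ) :
    M ^ k *ᵥ v = c ^ k • v := by
  induction k with
  | zero => simp
  | succ k ih => rw [pow_succ', ← mulVec_mulVec, ih, mulVec_smul, hv, smul_smul, pow_succ]

theorem dotProduct_mul_of_eq_one {ι R : Type*} [Fintype ι] [Semiring R] {x v : ι → R}
    (hv : ∀ i, x i ≠ 0 → v i = 1) (u : ι → R) : x ⬝ᵥ (u * v) = x ⬝ᵥ u := by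
  refine sum_congr rfl fun i _ => ?_
  by_cases hx : x i = 0
  · simp [hx]
  · simp [hv i hx]

section MarkovChain

variable {α R : Type*} [CommSemiring R]

def markovWeight (μ : α → R) (P : Matrix α α R) (n : ℕ) (Y : Fin n → α) : R :=
  (if hn : 0 < n then μ (Y ⟨0, hn⟩) else 1) *
    ∏ i : Fin (n - 1), P (Y ⟨i.val, by omega⟩) (Y ⟨i.val + 1, by omega⟩)

theorem markovWeight_succ (μ : α → R) (P : Matrix α α R) (n : ℕ) (Y : Fin (n + 1) → α) :
    markovWeight μ P (n + 1) Y = μ (Y 0) * ∏ i : Fin n, P (Y i.castSucc) (Y i.succ) := rfl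

theorem markovWeight_cons (μ : α → R) (P : Matrix α α R) (n : ℕ) (y : α)
    (Y : Fin n → α) :
    markovWeight μ P (n + 1) (Fin.cons y Y) = μ y * markovWeight (P y) P n Y := by
  cases n with
  | zero => simp [markovWeight]
  | succ n =>
    simp only [markovWeight_succ, Fin.prod_univ_succ, Fin.cons_zero, Fin.cons_succ,
      ← Fin.succ_castSucc, Fin.castSucc_zero]

variable [Fintype α]

theorem sum_markovWeight_succ (μ : α → R) (P : Matrix α α R) (n : ℕ)
    (F : (Fin (n + 1) → α) → R) :
    ∑ Y, markovWeight μ P (n + 1) Y * F Y =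
      ∑ y, μ y * ∑ Y, markovWeight (P y) P n Y * F (Fin.cons y Y) := by
  rw [← (Fin.consEquiv fun _ => α).sum_comp, Fintype.sum_prod_type]
  simp only [mul_sum, ← mul_assoc, ← markovWeight_cons]
  rfl

theorem sum_mul_dotProduct_row (μ u : α → R) (P : Matrix α α R) :
    ∑ y, μ y * (P y ⬝ᵥ u) = μ ⬝ᵥ (P *ᵥ u) := rfl

variable [DecidableEq α]

theorem sum_markovWeight_mul_apply (μ : α → R) (P : Matrix α α R) (n : ℕ) (g : α → R)
    (j : Fin (n + 1)) :
    ∑ Y, markovWeight μ P (n + 1) Y * g (Y j) =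
      μ ⬝ᵥ (P ^ (j : ℕ) *ᵥ (g * (P ^ (n - j) *ᵥ 1))) := by
  induction n generalizing μ g with
  | zero =>
    rw [sum_markovWeight_succ, Fin.fin_one_eq_zero j]
    simp [markovWeight, dotProduct]
  | succ n ih =>
    rw [sum_markovWeight_succ]
    cases j using Fin.cases with
    | zero =>
      have mass (y : α) : ∑ Y, markovWeight (P y) P (n + 1) Y = (P ^ (n + 1) *ᵥ 1) y := by
        have := ih (P y) 1 0
        simp only [Pi.one_apply, mul_one, Fin.val_zero, pow_zero, one_mulVec, one_mul,
          Nat.sub_zero] at this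
        rw [this, pow_succ', ← mulVec_mulVec]
        rfl
      simp only [Fin.cons_zero, ← sum_mul, mass, Fin.val_zero, pow_zero, one_mulVec,
        Nat.sub_zero]
      exact sum_congr rfl fun y _ => by simp only [Pi.mul_apply]; ring
    | succ j =>
      simp only [Fin.cons_succ, ih, Fin.val_succ, Nat.add_sub_add_right, sum_mul_dotProduct_row,
        mulVec_mulVec, ← pow_succ']

theorem sum_markovWeight_mul_apply_mul_apply (μ : α → R) (P : Matrix α α R) (n : ℕ)
    (f g : α → R) (a b : Fin (n + 1)) (hab : a < b) :
    ∑ Y, markovWeight μ P (n + 1) Y * (f (Y a) * g (Y b)) =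
      μ ⬝ᵥ (P ^ (a : ℕ) *ᵥ (f * (P ^ (b - a : ℕ) *ᵥ (g * (P ^ (n - b) *ᵥ 1))))) := by
  induction n generalizing μ with
  | zero => exact absurd hab (by simp [Fin.fin_one_eq_zero a, Fin.fin_one_eq_zero b])
  | succ n ih =>
    rw [sum_markovWeight_succ]
    cases b using Fin.cases with
    | zero => exact absurd hab (Fin.not_lt_zero a)
    | succ b =>
    cases a using Fin.cases with
    | zero =>
      simp only [Fin.cons_zero, Fin.cons_succ, mul_left_comm _ (f _), ← mul_sum,
        sum_markovWeight_mul_apply, Fin.val_zero, pow_zero, one_mulVec, Fin.val_succ,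
        Nat.sub_zero, Nat.add_sub_add_right, pow_succ', ← mulVec_mulVec]
      exact sum_congr rfl fun y _ => by simp only [Pi.mul_apply]; rw [mulVec]; ring
    | succ a =>
      simp only [Fin.cons_succ, ih _ a b (Fin.succ_lt_succ_iff.mp hab), Fin.val_succ,
        Nat.add_sub_add_right, sum_mul_dotProduct_row, mulVec_mulVec, ← pow_succ']

end MarkovChain

section BroadcastTree

variable {d : ℕ} {S : Type}

theorem treeConfig_snoc_apply_of_lt {h : ℕ} (τ : TreeConfig d h S) (β : (Fin (h + 1) → Fin d) → S)
    (k : ℕ) (hk : k < h + 1) :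
    (Fin.snoc τ β : TreeConfig d (h + 1) S) ⟨k, by omega⟩ = τ ⟨k, hk⟩ :=
  Fin.snoc_castSucc (α := fun ℓ : Fin (h + 2) => (Fin ℓ.val → Fin d) → S) (p := τ)
    (x := β) (i := ⟨k, hk⟩)

theorem rootOf_snoc {h : ℕ} (τ : TreeConfig d h S) (β : (Fin (h + 1) → Fin d) → S) :
    rootOf (Fin.snoc τ β : TreeConfig d (h + 1) S) = rootOf τ :=
  congrFun (treeConfig_snoc_apply_of_lt τ β 0 (Nat.succ_pos h)) Fin.elim0

theorem leavesOf_snoc {h : ℕ} (τ : TreeConfig d h S) (β : (Fin (h + 1) → Fin d) → S) :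
    leavesOf (Fin.snoc τ β : TreeConfig d (h + 1) S) = β :=
  Fin.snoc_last (α := fun ℓ : Fin (h + 2) => (Fin ℓ.val → Fin d) → S) (p := τ) (x := β)

theorem edgeProd_snoc {h : ℕ} (W : S → S → ℝ) (τ : TreeConfig d h S)
    (β : (Fin (h + 1) → Fin d) → S) :
    edgeProd d (h + 1) W (Fin.snoc τ β) =
      edgeProd d h W τ *
        ∏ f : Fin (h + 1) → Fin d, W (leavesOf τ (f ∘ Fin.castSucc)) (β f) := by
  unfold edgeProd
  rw [Fin.prod_univ_castSucc]
  congr 1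
  · exact prod_congr rfl fun ℓ _ => prod_congr rfl fun f _ =>
      congrArg₂ W (congrFun (treeConfig_snoc_apply_of_lt τ β ℓ (by omega)) _)
        (congrFun (treeConfig_snoc_apply_of_lt τ β (ℓ + 1) (by omega)) _)
  · exact prod_congr rfl fun f _ =>
      congrArg₂ W (congrFun (treeConfig_snoc_apply_of_lt τ β h (by omega)) _)
        (congrFun (leavesOf_snoc τ β) _)

theorem sum_treeConfig_succ [Fintype S] {h : ℕ} (F : TreeConfig d (h + 1) S → ℝ) :
    ∑ σ, F σ =
      ∑ β : (Fin (h + 1) → Fin d) → S, ∑ τ : TreeConfig d h S, F (Fin.snoc τ β) := by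
  rw [← (Fin.snocEquiv fun ℓ : Fin (h + 2) => (Fin ℓ.val → Fin d) → S).sum_comp,
    Fintype.sum_prod_type]
  rfl

def treeConfigZeroEquiv (d : ℕ) (S : Type) : TreeConfig d 0 S ≃ S where
  toFun := rootOf
  invFun s _ _ := s
  left_inv σ := by
    funext ℓ p
    obtain ⟨ℓ, hℓ⟩ := ℓ
    obtain rfl : ℓ = 0 := by omega
    exact congrArg (σ ⟨0, hℓ⟩) (Subsingleton.elim _ _)
  right_inv _ := rfl

def broadcastWRooted [DecidableEq S] (d h : ℕ) (W : S → S → ℝ) (r : S)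
    (σ : TreeConfig d h S) : ℝ :=
  (if rootOf σ = r then 1 else 0) * edgeProd d h W σ

theorem broadcastWRooted_snoc [DecidableEq S] {h : ℕ} (W : S → S → ℝ) (r : S)
    (τ : TreeConfig d h S) (β : (Fin (h + 1) → Fin d) → S) :
    broadcastWRooted d (h + 1) W r (Fin.snoc τ β) =
      broadcastWRooted d h W r τ *
        ∏ f : Fin (h + 1) → Fin d, W (leavesOf τ (f ∘ Fin.castSucc)) (β f) := by
  rw [broadcastWRooted, broadcastWRooted, rootOf_snoc, edgeProd_snoc, mul_assoc]

theorem broadcastWRooted_zero_const [DecidableEq S] (W : S → S → ℝ) (r s : S) :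
    broadcastWRooted d 0 W r (fun _ _ => s) = if s = r then 1 else 0 := by
  simp only [broadcastWRooted, edgeProd, univ_eq_empty, prod_empty, mul_one]
  rfl

theorem leavesOf_const {h : ℕ} (s : S) :
    leavesOf (fun _ _ => s : TreeConfig d h S) = fun _ => s :=
  rfl

theorem sum_treeConfig_zero [Fintype S] (F : TreeConfig d 0 S → ℝ) :
    ∑ σ, F σ = ∑ s : S, F fun _ _ => s :=
  ((treeConfigZeroEquiv d S).symm.sum_comp F).symm

variable [Fintype S] (W : S → S → ℝ) (hW : ∀ a, ∑ b, W a b = 1)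
include hW

theorem sum_prod_eq_one {ι : Type*} [Fintype ι] [DecidableEq ι] (p : ι → S) :
    ∑ β : ι → S, ∏ g, W (p g) (β g) = 1 :=
  (Fintype.prod_sum fun g b => W (p g) b).symm.trans (prod_eq_one fun g _ => hW (p g))

theorem sum_prod_mul_apply {ι : Type*} [Fintype ι] [DecidableEq ι] (p : ι → S) (u : S → ℝ)
    (f : ι) : ∑ β : ι → S, (∏ g, W (p g) (β g)) * u (β f) = (of W *ᵥ u) (p f) := by
  calc ∑ β : ι → S, (∏ g, W (p g) (β g)) * u (β f)
      = ∑ β : ι → S, ∏ g, W (p g) (β g) * (if g = f then u (β g) else 1) := by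
        refine sum_congr rfl fun β _ => ?_
        rw [prod_mul_distrib, prod_ite_eq' Finset.univ f]
        simp
    _ = ∏ g, ∑ b, W (p g) b * (if g = f then u b else 1) :=
        (Fintype.prod_sum fun g b => W (p g) b * if g = f then u b else 1).symm
    _ = ∏ g, if g = f then (of W *ᵥ u) (p g) else 1 := by
        refine prod_congr rfl fun g _ => ?_
        split_ifs
        · simp [mulVec, dotProduct]
        · simpa using hW (p g)
    _ = (of W *ᵥ u) (p f) := by simp

variable [DecidableEq S]

theorem sum_broadcastWRooted (r : S) :
    ∀ h, ∑ σ : TreeConfig d h S, broadcastWRooted d h W r σ = 1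
  | 0 => by
    rw [sum_treeConfig_zero]
    simp [broadcastWRooted_zero_const]
  | h + 1 => by
    rw [sum_treeConfig_succ, sum_comm, ← sum_broadcastWRooted r h]
    refine sum_congr rfl fun τ _ => ?_
    simp only [broadcastWRooted_snoc, ← mul_sum, sum_prod_eq_one W hW, mul_one]

theorem sum_broadcastWRooted_mul_leaf (r : S) :
    ∀ h (u : S → ℝ) (f : Fin h → Fin d),
      ∑ σ, broadcastWRooted d h W r σ * u (leavesOf σ f) = (of W ^ h *ᵥ u) r
  | 0, u, f => by
    rw [sum_treeConfig_zero]
    simp [broadcastWRooted_zero_const, leavesOf_const]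
  | h + 1, u, f => by
    rw [sum_treeConfig_succ, sum_comm, pow_succ, ← mulVec_mulVec,
      ← sum_broadcastWRooted_mul_leaf r h (of W *ᵥ u) (f ∘ Fin.castSucc)]
    refine sum_congr rfl fun τ _ => ?_
    simp only [broadcastWRooted_snoc, leavesOf_snoc, mul_assoc, ← mul_sum,
      sum_prod_mul_apply W hW]

end BroadcastTree

section Ising

variable {d h : ℕ} {ρ : ℝ}

theorem isingEdge_sum (ρ : ℝ) (a : Bool) : ∑ b, isingEdge ρ a b = 1 := by
  cases a <;> simp [isingEdge] <;> ring

theorem isingEdge_mulVec_spinVal (ρ : ℝ) : of (isingEdge ρ) *ᵥ spinVal = ρ • spinVal := by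
  funext a
  cases a <;> simp [mulVec, dotProduct, isingEdge, spinVal] <;> ring

theorem isingEdge_nonneg (hρ : |ρ| ≤ 1) (a b : Bool) : 0 ≤ isingEdge ρ a b := by
  obtain ⟨h₁, h₂⟩ := abs_le.mp hρ
  unfold isingEdge
  split_ifs <;> linarith

theorem isingWRooted_eq_broadcastWRooted (ρ : ℝ) (r : Bool) (σ : TreeConfig d h Bool) :
    isingWRooted d h ρ r σ = broadcastWRooted d h (isingEdge ρ) r σ := rfl

theorem sum_isingWRooted (ρ : ℝ) (r : Bool) :
    ∑ σ : TreeConfig d h Bool, isingWRooted d h ρ r σ = 1 := by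
  simpa only [isingWRooted_eq_broadcastWRooted] using
    sum_broadcastWRooted _ (isingEdge_sum ρ) r h

theorem sum_isingWRooted_mul_leafSum (ρ : ℝ) (r : Bool) :
    ∑ σ : TreeConfig d h Bool, isingWRooted d h ρ r σ * leafSum d h σ =
      spinVal r * ((d : ℝ) * ρ) ^ h := by
  have leaf (f : Fin h → Fin d) :
      ∑ σ : TreeConfig d h Bool, isingWRooted d h ρ r σ * spinVal (leavesOf σ f) =
        ρ ^ h * spinVal r := by
    rw [← smul_eq_mul, ← Pi.smul_apply, ← pow_mulVec_eq_smul (isingEdge_mulVec_spinVal ρ)]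
    simpa only [isingWRooted_eq_broadcastWRooted] using
      sum_broadcastWRooted_mul_leaf _ (isingEdge_sum ρ) r h spinVal f
  simp only [leafSum, mul_sum]
  rw [sum_comm]
  simp [leaf, mul_pow]
  ring

def flipSpins (σ : TreeConfig d h Bool) : TreeConfig d h Bool := fun ℓ p => !σ ℓ p

theorem isingEdge_not_not (ρ : ℝ) (a b : Bool) : isingEdge ρ (!a) (!b) = isingEdge ρ a b := by
  cases a <;> cases b <;> rfl

theorem spinVal_not (b : Bool) : spinVal (!b) = -spinVal b := by
  cases b <;> simp [spinVal]

theorem flipSpins_involutive : Function.Involutive (flipSpins (d := d) (h := h)) := by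
  intro σ
  funext ℓ p
  simp [flipSpins]

theorem isingWRooted_flipSpins (ρ : ℝ) (r : Bool) (σ : TreeConfig d h Bool) :
    isingWRooted d h ρ r (flipSpins σ) = isingWRooted d h ρ (!r) σ := by
  have edges : edgeProd d h (isingEdge ρ) (flipSpins σ) = edgeProd d h (isingEdge ρ) σ := by
    unfold edgeProd flipSpins
    exact prod_congr rfl fun ℓ _ => prod_congr rfl fun f _ => isingEdge_not_not ρ _ _
  have root : rootOf (flipSpins σ) = !rootOf σ := rfl
  simp only [isingWRooted, edges, root, Bool.not_eq_eq_eq_not]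

theorem leafSum_flipSpins (σ : TreeConfig d h Bool) :
    leafSum d h (flipSpins σ) = -leafSum d h σ := by
  simp only [leafSum, ← sum_neg_distrib]
  exact sum_congr rfl fun f _ => spinVal_not _

theorem sum_isingWRooted_mul_leafSum_pow_three (ρ : ℝ) (r : Bool) :
    ∑ σ : TreeConfig d h Bool, isingWRooted d h ρ r σ * leafSum d h σ ^ 3 =
      spinVal r * isingMoment d h ρ 3 := by
  cases r
  · rw [← Equiv.sum_comp (flipSpins_involutive.toPerm _)]
    simp only [Function.Involutive.coe_toPerm, isingWRooted_flipSpins, leafSum_flipSpins,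
      Bool.not_false, isingMoment, spinVal, Bool.false_eq_true, if_false, neg_one_mul,
      ← sum_neg_distrib]
    exact sum_congr rfl fun σ _ => by ring
  · simp [isingMoment, spinVal]

end Ising

section LeafMarginal

variable {d w : ℕ} {ρ : ℝ}

theorem leafWRooted_dotProduct (ρ : ℝ) (r : Bool) (ψ : ((Fin w → Fin d) → Bool) → ℝ) :
    leafWRooted d w ρ r ⬝ᵥ ψ = ∑ σ, isingWRooted d w ρ r σ * ψ (leavesOf σ) := by
  simp only [leafWRooted, dotProduct, sum_mul, ite_mul, zero_mul]
  rw [sum_comm]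
  simp

theorem leafWRooted_dotProduct_one (ρ : ℝ) (r : Bool) : leafWRooted d w ρ r ⬝ᵥ 1 = 1 := by
  simpa [leafWRooted_dotProduct] using sum_isingWRooted ρ r

theorem leafWRooted_dotProduct_blockSum (ρ : ℝ) (r : Bool) :
    leafWRooted d w ρ r ⬝ᵥ blockSum d w = spinVal r * ((d : ℝ) * ρ) ^ w :=
  (leafWRooted_dotProduct ρ r _).trans (sum_isingWRooted_mul_leafSum ρ r)

theorem leafWRooted_dotProduct_blockSum_pow_three (ρ : ℝ) (r : Bool) :
    leafWRooted d w ρ r ⬝ᵥ (fun y => blockSum d w y ^ 3) = spinVal r * isingMoment d w ρ 3 :=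
  (leafWRooted_dotProduct ρ r _).trans (sum_isingWRooted_mul_leafSum_pow_three ρ r)

theorem leafWRooted_nonneg (hρ : |ρ| ≤ 1) (r : Bool) (y : (Fin w → Fin d) → Bool) :
    0 ≤ leafWRooted d w ρ r y := by
  refine sum_nonneg fun σ _ => ?_
  split_ifs
  · exact mul_nonneg (by split_ifs <;> norm_num)
      (prod_nonneg fun _ _ => prod_nonneg fun _ _ => isingEdge_nonneg hρ _ _)
  · rfl

theorem leafW_eq_average (ρ : ℝ) (y : (Fin w → Fin d) → Bool) :
    leafW d w ρ y = (leafWRooted d w ρ true y + leafWRooted d w ρ false y) / 2 := by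
  simp only [leafW, leafWRooted, ← sum_add_distrib, sum_div]
  refine sum_congr rfl fun σ _ => ?_
  split_ifs
  · simp only [isingW, broadcastW, isingWRooted]
    cases rootOf σ <;> simp <;> ring
  · simp

theorem rootPostMean_eq (ρ : ℝ) (y : (Fin w → Fin d) → Bool) :
    rootPostMean d w ρ y =
      (leafWRooted d w ρ true y - leafWRooted d w ρ false y) /
        (leafWRooted d w ρ true y + leafWRooted d w ρ false y) := by
  have numerator : (∑ σ : TreeConfig d w Bool,
      if leavesOf σ = y then isingW d w ρ σ * spinVal (rootOf σ) else 0) =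
        (leafWRooted d w ρ true y - leafWRooted d w ρ false y) / 2 := by
    simp only [leafWRooted, ← sum_sub_distrib, sum_div]
    refine sum_congr rfl fun σ _ => ?_
    split_ifs
    · simp only [isingW, broadcastW, isingWRooted]
      cases rootOf σ <;> simp [spinVal] <;> ring
    · simp
  rw [rootPostMean, numerator, leafW_eq_average, div_div_div_cancel_right₀ two_ne_zero]

theorem leafWRooted_eq_leafW_mul (hρ : |ρ| ≤ 1) (r : Bool) (y : (Fin w → Fin d) → Bool) :
    leafWRooted d w ρ r y = leafW d w ρ y * (1 + spinVal r * rootPostMean d w ρ y) := by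
  have ht := leafWRooted_nonneg hρ true y
  have hf := leafWRooted_nonneg hρ false y
  rw [leafW_eq_average, rootPostMean_eq]
  by_cases h0 : leafWRooted d w ρ true y + leafWRooted d w ρ false y = 0
  · have : leafWRooted d w ρ r y = 0 := by cases r <;> linarith
    rw [this, h0]
    ring
  · field_simp
    cases r <;> simp [spinVal] <;> ring

theorem leafWRooted_dotProduct_eq (hρ : |ρ| ≤ 1) (r : Bool)
    (ψ : ((Fin w → Fin d) → Bool) → ℝ) :
    leafWRooted d w ρ r ⬝ᵥ ψ =
      leafW d w ρ ⬝ᵥ ψ + spinVal r * (leafW d w ρ ⬝ᵥ (rootPostMean d w ρ * ψ)) := by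
  simp only [dotProduct, leafWRooted_eq_leafW_mul hρ, mul_sum, ← sum_add_distrib,
    Pi.mul_apply]
  exact sum_congr rfl fun y _ => by ring

theorem leafW_dotProduct_of_leafWRooted_dotProduct (hρ : |ρ| ≤ 1)
    {ψ : ((Fin w → Fin d) → Bool) → ℝ} {a c : ℝ}
    (hψ : ∀ r, leafWRooted d w ρ r ⬝ᵥ ψ = a + spinVal r * c) :
    leafW d w ρ ⬝ᵥ ψ = a ∧ leafW d w ρ ⬝ᵥ (rootPostMean d w ρ * ψ) = c := by
  have ht := hψ true
  have hf := hψ false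
  rw [leafWRooted_dotProduct_eq hρ] at ht hf
  simp only [spinVal, if_true, Bool.false_eq_true, if_false] at ht hf
  constructor <;> linarith

theorem leafW_dotProduct_one_and_rootPostMean (hρ : |ρ| ≤ 1) :
    leafW d w ρ ⬝ᵥ 1 = 1 ∧ leafW d w ρ ⬝ᵥ rootPostMean d w ρ = 0 := by
  simpa using leafW_dotProduct_of_leafWRooted_dotProduct hρ (ψ := 1) (a := 1) (c := 0)
    fun r => by rw [leafWRooted_dotProduct_one]; ring

theorem leafWRooted_dotProduct_rootPostMean (hρ : |ρ| ≤ 1) (r : Bool) :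
    leafWRooted d w ρ r ⬝ᵥ rootPostMean d w ρ = spinVal r * qIsing d w ρ := by
  rw [leafWRooted_dotProduct_eq hρ, (leafW_dotProduct_one_and_rootPostMean hρ).2, zero_add,
    qIsing]
  simp only [dotProduct, Pi.mul_apply, sq]

end LeafMarginal

section AutoregressiveChain

variable {d w m : ℕ} {ρ : ℝ}

theorem sum_lcaLaw (hd : 1 < d) (hm : 0 < m) : ∑ s ∈ Finset.Icc 1 m, lcaLaw d m s = 1 := by
  have hd1 : (1 : ℝ) < d := by exact_mod_cast hd
  have hdm : (1 : ℝ) < (d : ℝ) ^ m := one_lt_pow₀ hd1 hm.ne'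
  have reflect :
      ∑ s ∈ Finset.Icc 1 m, (d : ℝ) ^ (m - s) = ∑ i ∈ Finset.range m, (d : ℝ) ^ i := by
    refine sum_nbij' (fun s => m - s) (fun i => m - i) ?_ ?_ ?_ ?_ fun _ _ => rfl <;>
      intro s hs <;> simp only [mem_Icc, mem_range] at hs ⊢ <;> omega
  have geom := geom_sum_mul (d : ℝ) m
  calc ∑ s ∈ Finset.Icc 1 m, lcaLaw d m s
      = (∑ s ∈ Finset.Icc 1 m, (d : ℝ) ^ (m - s)) * ((d - 1) / ((d : ℝ) ^ m - 1)) := by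
        rw [sum_mul]
        refine sum_congr rfl fun s hs => ?_
        rw [lcaLaw, if_pos (mem_Icc.mp hs)]
        ring
    _ = 1 := by
        rw [reflect, ← mul_div_assoc, geom, div_self (by linarith)]

theorem sum_pairRootW_mul (ρ : ℝ) (s : ℕ) (x x' u u' : ℝ) :
    ∑ r, ∑ r', pairRootW ρ s r r' * (x * (1 + spinVal r * u)) * (x' * (1 + spinVal r' * u')) =
      x * x' * (1 + ρ ^ (2 * s) * u * u') := by
  simp [pairRootW, spinVal]
  ring

theorem arStep_of_leafW_ne_zero (hd : 1 < d) (hρ : |ρ| ≤ 1) (hm : 0 < m)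
    {y : (Fin w → Fin d) → Bool} (hy : leafW d w ρ y ≠ 0) (y' : (Fin w → Fin d) → Bool) :
    arStep d w m ρ y y' =
      leafW d w ρ y' * (1 + alphaAR d m ρ * rootPostMean d w ρ y * rootPostMean d w ρ y') := by
  have term (s : ℕ) : lcaLaw d m s * (leafW d w ρ y * leafW d w ρ y' *
        (1 + ρ ^ (2 * s) * rootPostMean d w ρ y * rootPostMean d w ρ y') / leafW d w ρ y) =
      lcaLaw d m s * leafW d w ρ y' + lcaLaw d m s * ρ ^ (2 * s) *
        (leafW d w ρ y' * rootPostMean d w ρ y * rootPostMean d w ρ y') := by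
    field_simp
  simp only [arStep, alphaAR, leafWRooted_eq_leafW_mul hρ, sum_pairRootW_mul, term,
    sum_add_distrib, ← sum_mul, sum_lcaLaw hd hm]
  ring

-- Division by `leafW d w ρ y = 0` makes these rows vanish: `arStep` is stochastic only on the
-- support of `leafW`.
theorem arStep_of_leafW_eq_zero {y : (Fin w → Fin d) → Bool} (hy : leafW d w ρ y = 0)
    (y' : (Fin w → Fin d) → Bool) : arStep d w m ρ y y' = 0 := by
  simp [arStep, hy]

theorem rootPostMean_of_leafW_eq_zero {y : (Fin w → Fin d) → Bool} (hy : leafW d w ρ y = 0) :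
    rootPostMean d w ρ y = 0 := by
  rw [rootPostMean, hy, div_zero]

theorem arStep_mulVec_apply (hd : 1 < d) (hρ : |ρ| ≤ 1) (hm : 0 < m)
    {y : (Fin w → Fin d) → Bool} (hy : leafW d w ρ y ≠ 0)
    (v : ((Fin w → Fin d) → Bool) → ℝ) :
    (of (arStep d w m ρ) *ᵥ v) y = leafW d w ρ ⬝ᵥ v +
      alphaAR d m ρ * rootPostMean d w ρ y * (leafW d w ρ ⬝ᵥ (rootPostMean d w ρ * v)) := by
  simp only [mulVec, dotProduct, of_apply, arStep_of_leafW_ne_zero hd hρ hm hy, mul_sum,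
    ← sum_add_distrib, Pi.mul_apply]
  exact sum_congr rfl fun y' _ => by ring

theorem arStep_mulVec_of_leafWRooted_dotProduct (hd : 1 < d) (hρ : |ρ| ≤ 1) (hm : 0 < m)
    {ψ : ((Fin w → Fin d) → Bool) → ℝ} {c : ℝ}
    (hψ : ∀ r, leafWRooted d w ρ r ⬝ᵥ ψ = spinVal r * c) :
    of (arStep d w m ρ) *ᵥ ψ = (alphaAR d m ρ * c) • rootPostMean d w ρ := by
  funext y
  by_cases hy : leafW d w ρ y = 0
  · simp [mulVec, dotProduct, arStep_of_leafW_eq_zero hy, rootPostMean_of_leafW_eq_zero hy]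
  · obtain ⟨hmean, hcorr⟩ :=
      leafW_dotProduct_of_leafWRooted_dotProduct hρ (a := 0) fun r => by rw [hψ, zero_add]
    rw [arStep_mulVec_apply hd hρ hm hy, hmean, hcorr, Pi.smul_apply, smul_eq_mul]
    ring

theorem arStep_pow_mulVec_rootPostMean (hd : 1 < d) (hρ : |ρ| ≤ 1) (hm : 0 < m) (k : ℕ) :
    of (arStep d w m ρ) ^ k *ᵥ rootPostMean d w ρ =
      (alphaAR d m ρ * qIsing d w ρ) ^ k • rootPostMean d w ρ :=
  pow_mulVec_eq_smul
    (arStep_mulVec_of_leafWRooted_dotProduct hd hρ hm (leafWRooted_dotProduct_rootPostMean hρ)) k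

theorem arStep_pow_mulVec_one_apply (hd : 1 < d) (hρ : |ρ| ≤ 1) (hm : 0 < m) (k : ℕ)
    {y : (Fin w → Fin d) → Bool} (hy : leafW d w ρ y ≠ 0) :
    (of (arStep d w m ρ) ^ k *ᵥ 1) y = 1 := by
  induction k generalizing y with
  | zero => simp
  | succ k ih =>
    obtain ⟨hone, hmean⟩ := leafW_dotProduct_one_and_rootPostMean (d := d) (w := w) hρ
    have hv (u : ((Fin w → Fin d) → Bool) → ℝ) :
        leafW d w ρ ⬝ᵥ (u * (of (arStep d w m ρ) ^ k *ᵥ 1)) = leafW d w ρ ⬝ᵥ u :=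
      dotProduct_mul_of_eq_one (fun y' hy' => ih hy') u
    have hv₁ := hv 1
    rw [one_mul] at hv₁
    rw [pow_succ', ← mulVec_mulVec, arStep_mulVec_apply hd hρ hm hy, hv₁, hv, hone, hmean,
      mul_zero, add_zero]

theorem leafW_vecMul_arStep (hd : 1 < d) (hρ : |ρ| ≤ 1) (hm : 0 < m) :
    leafW d w ρ ᵥ* of (arStep d w m ρ) = leafW d w ρ := by
  obtain ⟨hone, hmean⟩ := leafW_dotProduct_one_and_rootPostMean (d := d) (w := w) hρ
  funext y'
  have term (y : (Fin w → Fin d) → Bool) : leafW d w ρ y * arStep d w m ρ y y' =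
      leafW d w ρ y' * (leafW d w ρ y * 1 +
        alphaAR d m ρ * rootPostMean d w ρ y' * (leafW d w ρ y * rootPostMean d w ρ y)) := by
    by_cases hy : leafW d w ρ y = 0
    · simp [hy]
    · rw [arStep_of_leafW_ne_zero hd hρ hm hy]
      ring
  simp only [vecMul, dotProduct, of_apply, term, ← mul_sum, sum_add_distrib]
  simp only [dotProduct, Pi.one_apply] at hone hmean
  rw [hone, hmean]
  ring

theorem leafW_dotProduct_arStep_pow_mulVec (hd : 1 < d) (hρ : |ρ| ≤ 1) (hm : 0 < m) (k : ℕ)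
    (v : ((Fin w → Fin d) → Bool) → ℝ) :
    leafW d w ρ ⬝ᵥ (of (arStep d w m ρ) ^ k *ᵥ v) = leafW d w ρ ⬝ᵥ v := by
  rw [dotProduct_mulVec]
  congr 1
  induction k with
  | zero => simp
  | succ k ih => rw [pow_succ, ← vecMul_vecMul, ih, leafW_vecMul_arStep hd hρ hm]

theorem arExp_eq_sum_markovWeight (n : ℕ) (F : (Fin n → (Fin w → Fin d) → Bool) → ℝ) :
    arExp d w m n ρ F = ∑ Y, markovWeight (leafW d w ρ) (of (arStep d w m ρ)) n Y * F Y := rfl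

theorem arExp_apply_mul_apply {n : ℕ} (hd : 1 < d) (hρ : |ρ| ≤ 1) (hm : 0 < m)
    {a b : Fin n} (hab : a < b) {f g : ((Fin w → Fin d) → Bool) → ℝ} {cf cg : ℝ}
    (hf : ∀ r, leafWRooted d w ρ r ⬝ᵥ f = spinVal r * cf)
    (hg : ∀ r, leafWRooted d w ρ r ⬝ᵥ g = spinVal r * cg) :
    arExp d w m n ρ (fun Y => f (Y a) * g (Y b)) =
      alphaAR d m ρ * (alphaAR d m ρ * qIsing d w ρ) ^ (b.val - a.val - 1) * cf * cg := by
  obtain ⟨k, rfl⟩ : ∃ k, n = k + 1 := Nat.exists_eq_succ_of_ne_zero (Fin.pos a).ne'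
  set P := of (arStep d w m ρ)
  set π := leafW d w ρ
  set μ := rootPostMean d w ρ
  have hgap : 1 ≤ (b : ℕ) - a := by have := Fin.lt_def.mp hab; omega
  have htail (r : Bool) :
      leafWRooted d w ρ r ⬝ᵥ (g * (P ^ (k - b) *ᵥ 1)) = spinVal r * cg := by
    refine (dotProduct_mul_of_eq_one (fun y hy => ?_) g).trans (hg r)
    refine arStep_pow_mulVec_one_apply hd hρ hm _ fun h0 => hy ?_
    rw [leafWRooted_eq_leafW_mul hρ, h0, zero_mul]
  have hcorr : π ⬝ᵥ (μ * f) = cf :=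
    (leafW_dotProduct_of_leafWRooted_dotProduct hρ (a := 0) fun r => by rw [hf, zero_add]).2
  calc arExp d w m (k + 1) ρ (fun Y => f (Y a) * g (Y b))
      = π ⬝ᵥ (P ^ (a : ℕ) *ᵥ (f * (P ^ (b - a : ℕ) *ᵥ (g * (P ^ (k - b) *ᵥ 1))))) := by
        rw [arExp_eq_sum_markovWeight, sum_markovWeight_mul_apply_mul_apply _ _ _ _ _ _ _ hab]
    _ = π ⬝ᵥ (f * (P ^ (b - a - 1 : ℕ) *ᵥ (P *ᵥ (g * (P ^ (k - b) *ᵥ 1))))) := by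
        rw [leafW_dotProduct_arStep_pow_mulVec hd hρ hm, mulVec_mulVec, ← pow_succ,
          Nat.sub_add_cancel hgap]
    _ = (alphaAR d m ρ * cg * (alphaAR d m ρ * qIsing d w ρ) ^ (b - a - 1 : ℕ)) *
          (π ⬝ᵥ (μ * f)) := by
        rw [arStep_mulVec_of_leafWRooted_dotProduct hd hρ hm htail, mulVec_smul,
          arStep_pow_mulVec_rootPostMean hd hρ hm, smul_smul, mul_smul_comm, dotProduct_smul,
          smul_eq_mul, mul_comm f]
    _ = _ := by rw [hcorr]; ring

end AutoregressiveChain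

theorem statement16_general (d h w : ℕ) (hd : 2 ≤ d) (ρ : ℝ)
    (hρ : ρ ∈ Set.Icc (0 : ℝ) 1) :
    ∀ a b : Fin (d ^ (h - w)), a < b →
      arExp d w (h - w) (d ^ (h - w)) ρ
          (fun Y => blockSum d w (Y a) ^ 3 * blockSum d w (Y b)) =
        alphaAR d (h - w) ρ * (alphaAR d (h - w) ρ * qIsing d w ρ) ^ (b.val - a.val - 1) *
          isingMoment d w ρ 3 * ((d : ℝ) * ρ) ^ w ∧
      arExp d w (h - w) (d ^ (h - w)) ρ
          (fun Y => blockSum d w (Y a) * blockSum d w (Y b) ^ 3) =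
        alphaAR d (h - w) ρ * (alphaAR d (h - w) ρ * qIsing d w ρ) ^ (b.val - a.val - 1) *
          isingMoment d w ρ 3 * ((d : ℝ) * ρ) ^ w := by
  intro a b hab
  have hm : 0 < h - w := by
    by_contra h0
    have hsingle : d ^ (h - w) = 1 := by rw [Nat.eq_zero_of_not_pos h0, pow_zero]
    exact absurd hab (by have := b.isLt; have := a.isLt; rw [Fin.lt_def]; omega)
  have hρ' : |ρ| ≤ 1 := abs_le.mpr ⟨by linarith [hρ.1], hρ.2⟩
  have hZ := leafWRooted_dotProduct_blockSum (d := d) (w := w) ρ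
  have hZ3 := leafWRooted_dotProduct_blockSum_pow_three (d := d) (w := w) ρ
  refine ⟨arExp_apply_mul_apply (f := fun y => blockSum d w y ^ 3) hd hρ' hm hab hZ3 hZ, ?_⟩
  rw [arExp_apply_mul_apply (g := fun y => blockSum d w y ^ 3) hd hρ' hm hab hZ hZ3]
  ring

/-- In the autoregressive Ising broadcast process with context depth `w`
on `T(d,h)`, for `a < b` the block sums satisfy
`E[Z_a³ Z_b] = E[Z_a Z_b³] = α (α q_w)^{b-a-1} M_{d,ρ,w}(3) (dρ)^w`. -/
theorem statement16 (d h w : ℕ) (hd : 2 ≤ d) (hw : w ≤ h) (ρ : ℝ)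
    (hρ : ρ ∈ Set.Icc (0 : ℝ) 1) :
    ∀ a b : Fin (d ^ (h - w)), a < b →
      arExp d w (h - w) (d ^ (h - w)) ρ
          (fun Y => blockSum d w (Y a) ^ 3 * blockSum d w (Y b)) =
        alphaAR d (h - w) ρ * (alphaAR d (h - w) ρ * qIsing d w ρ) ^ (b.val - a.val - 1) *
          isingMoment d w ρ 3 * ((d : ℝ) * ρ) ^ w ∧
      arExp d w (h - w) (d ^ (h - w)) ρ
          (fun Y => blockSum d w (Y a) * blockSum d w (Y b) ^ 3) =
        alphaAR d (h - w) ρ * (alphaAR d (h - w) ρ * qIsing d w ρ) ^ (b.val - a.val - 1) *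
          isingMoment d w ρ 3 * ((d : ℝ) * ρ) ^ w :=
  statement16_general d h w hd ρ hρ
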